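/- arXiv:2311.16880 — 6 statements merged into one kernel-verified Lean document; each statement's English description precedes it below -/
import Mathlib

section
/- Define ŝ ∈ E for each 1-dimensional subspace s of V satisfying ‖ŝ‖² = [n]-1, ⟨ŝ,t̂⟩ = -1 for s ≠ t, and Σ_s ŝ = 0; for a subspace u of V set û = Σ_{s ⊆ u, dim s = 1} ŝ. Then for subspaces u, v of V with dim u = i, dim v = j, dim(u ∩ v) = h, one has ⟨û, v̂⟩ = [n][h] - [i][j]. -/
/-!
Expanding both sums, `⟪û, v̂⟫ = ∑_{s ≤ u, t ≤ v} ⟪ŝ, t̂⟫` with `⟪ŝ, t̂⟫ = [n]·δ_{st} - 1`, which equals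
`[n]·#(lines in u ⊓ v) - #(lines in u)·#(lines in v)`; and the lines in a subspace `w` are the
points of `ℙ(w)`, of which there are `[dim w]`.
-/

open Module Finset
open scoped LinearAlgebra.Projectivization

/-- The Gaussian number `[m] = (q^m - 1)/(q - 1)` as a real number. -/
noncomputable def gaussR (q m : ℕ) : ℝ := ((q : ℝ) ^ m - 1) / ((q : ℝ) - 1)

/-- The vector `û ∈ E` attached to a subspace `u`: the sum of `ŝ` over all
one-dimensional subspaces `s ⊆ u`. -/
noncomputable def uhat {F V : Type*} [Field F] [AddCommGroup V] [Module F V]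
    {E : Type*} [NormedAddCommGroup E] [InnerProductSpace ℝ E]
    (shat : {s : Submodule F V // Module.finrank F s = 1} → E)
    (u : Submodule F V) : E :=
  ∑ᶠ (s : {s : Submodule F V // Module.finrank F s = 1}) (_ : s.1 ≤ u), shat s

lemma gaussR_eq_sum_range {q : ℕ} (hq : q ≠ 1) (m : ℕ) :
    gaussR q m = ∑ i ∈ range m, (q : ℝ) ^ i :=
  (geom_sum_eq (by exact_mod_cast hq) m).symm

lemma real_inner_sum_sum_of_inner_eq {ι E : Type*} [DecidableEq ι] [NormedAddCommGroup E]
    [InnerProductSpace ℝ E] {f : ι → E} {c : ℝ}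
    (hf : ∀ s t, inner ℝ (f s) (f t) = (if s = t then c else 0) - 1) (A B : Finset ι) :
    inner ℝ (∑ s ∈ A, f s) (∑ t ∈ B, f t) = c * #(A ∩ B) - #A * #B := by
  simp only [sum_inner, inner_sum, hf, sum_sub_distrib, sum_ite_eq', sum_const, nsmul_eq_mul,
    mul_one]
  rw [sum_ite_mem, sum_const, nsmul_eq_mul, inter_comm]
  ring

section Lines

variable {F V : Type*} [Field F] [AddCommGroup V] [Module F V]

lemma Submodule.natCard_lines_le_eq_card_projectivization (w : Submodule F V) :
    Nat.card {s : {s : Submodule F V // finrank F s = 1} // s.1 ≤ w} = Nat.card (ℙ F w) := by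
  rw [Nat.card_congr (Projectivization.equivSubmodule F w)]
  refine Nat.card_congr ((Equiv.subtypeSubtypeEquivSubtypeInter
    (fun s : Submodule F V => finrank F s = 1) (· ≤ w)).trans ?_)
  refine ((Equiv.subtypeEquivRight fun _ => and_comm).trans
    (Equiv.subtypeSubtypeEquivSubtypeInter _ _).symm).trans ?_
  exact ((Submodule.MapSubtype.orderIso w).toEquiv.subtypeEquiv fun t => by
    show _ ↔ finrank F (t.map w.subtype) = 1
    rw [Submodule.finrank_map_subtype_eq]).symm

lemma Submodule.natCard_lines_le_eq_gaussR [Finite F] (w : Submodule F V) :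
    (Nat.card {s : {s : Submodule F V // finrank F s = 1} // s.1 ≤ w} : ℝ)
      = gaussR (Nat.card F) (finrank F w) := by
  rw [Submodule.natCard_lines_le_eq_card_projectivization,
    Projectivization.card_of_finrank F w rfl, gaussR_eq_sum_range Finite.one_lt_card.ne']
  simp only [Nat.cast_sum, Nat.cast_pow]

open Classical in
lemma uhat_eq_sum [Fintype {s : Submodule F V // finrank F s = 1}] {E : Type*}
    [NormedAddCommGroup E] [InnerProductSpace ℝ E]
    (shat : {s : Submodule F V // finrank F s = 1} → E) (w : Submodule F V) :
    uhat shat w = ∑ s with s.1 ≤ w, shat s := by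
  simp only [uhat, finsum_eq_if, finsum_eq_sum_of_fintype, sum_filter]

end Lines

theorem stmt9_general {F V : Type*} [Field F] [Fintype F] [AddCommGroup V] [Module F V]
    [FiniteDimensional F V] {q n : ℕ} (hq : Fintype.card F = q)
    {E : Type*} [NormedAddCommGroup E] [InnerProductSpace ℝ E]
    (shat : {s : Submodule F V // Module.finrank F s = 1} → E)
    (hnorm : ∀ s, ‖shat s‖ ^ 2 = gaussR q n - 1)
    (hinner : ∀ s t, s ≠ t → (inner ℝ (shat s) (shat t) : ℝ) = -1)
    (u v : Submodule F V) {i j h : ℕ}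
    (hu : Module.finrank F u = i) (hv : Module.finrank F v = j)
    (huv : Module.finrank F (u ⊓ v : Submodule F V) = h) :
    (inner ℝ (uhat shat u) (uhat shat v) : ℝ)
      = gaussR q n * gaussR q h - gaussR q i * gaussR q j := by
  classical
  have : Finite V := Module.finite_of_finite F
  have : Finite {s : Submodule F V // finrank F s = 1} :=
    .of_equiv _ (Projectivization.equivSubmodule F V)
  let := Fintype.ofFinite {s : Submodule F V // finrank F s = 1}
  have hgram : ∀ s t, inner ℝ (shat s) (shat t) = (if s = t then gaussR q n else 0) - 1 := by
    intro s t
    split_ifs with hst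
    · rw [hst, real_inner_self_eq_norm_sq, hnorm]
    · rw [hinner s t hst]
      ring
  have hcard (w : Submodule F V) :
      (#{s : {s : Submodule F V // finrank F s = 1} | s.1 ≤ w} : ℝ) = gaussR q (finrank F w) := by
    rw [← hq, ← Nat.card_eq_fintype_card, ← Submodule.natCard_lines_le_eq_gaussR,
      Nat.card_eq_fintype_card, Fintype.card_subtype]
  rw [uhat_eq_sum, uhat_eq_sum, real_inner_sum_sum_of_inner_eq hgram, ← filter_and]
  simp_rw [← le_inf_iff, hcard, hu, hv, huv]

theorem stmt9 {F V : Type*} [Field F] [Fintype F] [AddCommGroup V] [Module F V]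
    [FiniteDimensional F V] {q n : ℕ} (hq : Fintype.card F = q)
    (hn : Module.finrank F V = n)
    {E : Type*} [NormedAddCommGroup E] [InnerProductSpace ℝ E]
    (shat : {s : Submodule F V // Module.finrank F s = 1} → E)
    (hspan : Submodule.span ℝ (Set.range shat) = ⊤)
    (hnorm : ∀ s, ‖shat s‖ ^ 2 = gaussR q n - 1)
    (hinner : ∀ s t, s ≠ t → (inner ℝ (shat s) (shat t) : ℝ) = -1)
    (hsum : ∑ᶠ s, shat s = 0)
    (u v : Submodule F V) {i j h : ℕ}
    (hu : Module.finrank F u = i) (hv : Module.finrank F v = j)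
    (huv : Module.finrank F (u ⊓ v : Submodule F V) = h) :
    (inner ℝ (uhat shat u) (uhat shat v) : ℝ)
      = gaussR q n * gaussR q h - gaussR q i * gaussR q j :=
  stmt9_general hq shat hnorm hinner u v hu hv huv
end

section
/- With û defined as the sum of ŝ over 1-dimensional subspaces s ⊆ u (where the ŝ satisfy ‖ŝ‖² = [n]-1, ⟨ŝ,t̂⟩ = -1 for s ≠ t, Σ ŝ = 0), for a subspace u of dimension i one has ‖û‖² = q^i [i][n-i]. -/
/-!
The lines of `u` are the points of the projective space `ℙ(u)`, so there are `[i]` of them and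
`û` is a sum of `[i]` vectors of squared norm `[n] - 1` with pairwise inner products `-1`. Hence
`‖û‖² = [i]([n] - 1) - [i]([i] - 1) = [i]([n] - [i])`, and `[n] - [i] = q^i [n-i]`.
-/

open Finset Module
open scoped LinearAlgebra.Projectivization

theorem gaussR_sub_gaussR (q : ℕ) {i n : ℕ} (h : i ≤ n) :
    gaussR q n - gaussR q i = (q : ℝ) ^ i * gaussR q (n - i) := by
  rw [gaussR, gaussR, gaussR, ← sub_div, mul_div_assoc', mul_sub, ← pow_add,
    Nat.add_sub_cancel' h]
  ring_nf

theorem natCast_eq_gaussR {c q m : ℕ} (hq : 1 < q) (h : c * (q - 1) = q ^ m - 1) :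
    (c : ℝ) = gaussR q m := by
  have hq' : (1 : ℝ) < q := by exact_mod_cast hq
  have hqm : 1 ≤ q ^ m := Nat.one_le_pow _ _ (by lia)
  rw [gaussR, eq_div_iff (by linarith)]
  have hR := congrArg (Nat.cast : ℕ → ℝ) h
  push_cast [Nat.cast_sub hq.le, Nat.cast_sub hqm] at hR
  exact hR

theorem norm_sq_sum_of_inner_eq_neg_one {ι E : Type*} [NormedAddCommGroup E]
    [InnerProductSpace ℝ E] {x : ι → E} {a : ℝ} (hnorm : ∀ i, ‖x i‖ ^ 2 = a)
    (hinner : ∀ i j, i ≠ j → inner ℝ (x i) (x j) = -1) (T : Finset ι) :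
    ‖∑ i ∈ T, x i‖ ^ 2 = #T * (a + 1 - #T) := by
  classical
  have hentry : ∀ i j, inner ℝ (x i) (x j) = (if i = j then a + 1 else 0) - 1 := by
    intro i j
    by_cases h : i = j
    · subst h
      rw [if_pos rfl, real_inner_self_eq_norm_sq, hnorm, add_sub_cancel_right]
    · rw [if_neg h, hinner i j h, zero_sub]
  have hrow : ∀ i ∈ T, inner ℝ (x i) (∑ j ∈ T, x j) = a + 1 - #T := by
    intro i hi
    simp only [inner_sum, hentry, sum_sub_distrib, sum_ite_eq, if_pos hi, sum_const,
      nsmul_eq_mul, mul_one]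
  rw [← real_inner_self_eq_norm_sq, sum_inner, sum_congr rfl hrow, sum_const, nsmul_eq_mul]

section Lines

variable {F V : Type*} [Field F] [AddCommGroup V] [Module F V]

noncomputable def Submodule.linesLEEquivProjectivization (u : Submodule F V) :
    {s : {s : Submodule F V // finrank F s = 1} // s.1 ≤ u} ≃ ℙ F u :=
  ((Equiv.subtypeSubtypeEquivSubtypeInter _ _).trans <|
    (Equiv.subtypeEquivRight fun _ => and_comm).trans <|
    (Equiv.subtypeSubtypeEquivSubtypeInter _ _).symm.trans <|
    (Equiv.subtypeEquiv (Submodule.MapSubtype.orderIso u).toEquiv fun K =>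
      (u.finrank_map_subtype_eq K).symm ▸ Iff.rfl).symm).trans
    (Projectivization.equivSubmodule F u).symm

theorem Submodule.natCard_lines_le_mul (u : Submodule F V) :
    Nat.card {s : {s : Submodule F V // finrank F s = 1} // s.1 ≤ u} * (Nat.card F - 1) =
      Nat.card u - 1 := by
  rw [Nat.card_congr u.linesLEEquivProjectivization, Projectivization.card F u]

theorem Submodule.natCard_lines_le [Finite F] [FiniteDimensional F V] (u : Submodule F V) :
    (Nat.card {s : {s : Submodule F V // finrank F s = 1} // s.1 ≤ u} : ℝ) =
      gaussR (Nat.card F) (finrank F u) := by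
  refine natCast_eq_gaussR Finite.one_lt_card ?_
  rw [u.natCard_lines_le_mul, Module.natCard_eq_pow_finrank (K := F)]

end Lines

theorem stmt10_general {F V : Type*} [Field F] [Fintype F] [AddCommGroup V] [Module F V]
    [FiniteDimensional F V] {q n : ℕ} (hq : Fintype.card F = q)
    (hn : Module.finrank F V = n)
    {E : Type*} [NormedAddCommGroup E] [InnerProductSpace ℝ E]
    (shat : {s : Submodule F V // Module.finrank F s = 1} → E)
    (hnorm : ∀ s, ‖shat s‖ ^ 2 = gaussR q n - 1)
    (hinner : ∀ s t, s ≠ t → (inner ℝ (shat s) (shat t) : ℝ) = -1)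
    (u : Submodule F V) {i : ℕ} (hu : Module.finrank F u = i) :
    ‖uhat shat u‖ ^ 2 = (q : ℝ) ^ i * gaussR q i * gaussR q (n - i) := by
  have : Finite V := Module.finite_of_finite F
  set S := {s : {s : Submodule F V // finrank F s = 1} | s.1 ≤ u}
  have : Finite S := .of_equiv _ u.linesLEEquivProjectivization.symm
  have hS : S.Finite := S.toFinite
  have hcard : (#hS.toFinset : ℝ) = gaussR q i := by
    rw [← Set.ncard_eq_toFinset_card, ← Nat.card_coe_set_eq, ← hq, ← hu,
      ← Nat.card_eq_fintype_card]
    exact u.natCard_lines_le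
  have huhat : uhat shat u = ∑ s ∈ hS.toFinset, shat s := finsum_mem_eq_finite_toFinset_sum _ hS
  rw [huhat, norm_sq_sum_of_inner_eq_neg_one hnorm hinner,
    hcard, sub_add_cancel, gaussR_sub_gaussR q (hn ▸ hu ▸ u.finrank_le)]
  ring

theorem stmt10 {F V : Type*} [Field F] [Fintype F] [AddCommGroup V] [Module F V]
    [FiniteDimensional F V] {q n : ℕ} (hq : Fintype.card F = q)
    (hn : Module.finrank F V = n)
    {E : Type*} [NormedAddCommGroup E] [InnerProductSpace ℝ E]
    (shat : {s : Submodule F V // Module.finrank F s = 1} → E)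
    (hspan : Submodule.span ℝ (Set.range shat) = ⊤)
    (hnorm : ∀ s, ‖shat s‖ ^ 2 = gaussR q n - 1)
    (hinner : ∀ s t, s ≠ t → (inner ℝ (shat s) (shat t) : ℝ) = -1)
    (hsum : ∑ᶠ s, shat s = 0)
    (u : Submodule F V) {i : ℕ} (hu : Module.finrank F u = i) :
    ‖uhat shat u‖ ^ 2 = (q : ℝ) ^ i * gaussR q i * gaussR q (n - i) :=
  stmt10_general hq hn shat hnorm hinner u hu
end

section
/- The 4×4 matrix with columns over the basis (x̂, ŷ, (x∩y)^, (x+y)^) given by [[1,0,q^{2i}[k-i][n-k-i], q[i-1]²],[0,1,0,q^{i-1}],[0,0,-q^{2i}[n-k-i], q^i[i-1]],[0,0,-q^i[k-i],[i-1]]] has determinant -q^{k+i}[i-1][n-2k], which is nonzero when 1 < i < k and n > 2k. -/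
theorem stmt14 {q n k i : ℕ} (hq : 1 < q) (hnk : n > 2 * k) (hk : 2 * k ≥ 6)
    (hi1 : 1 < i) (hik : i < k) :
    Matrix.det !![(1 : ℝ), 0, (q : ℝ) ^ (2 * i) * gaussR q (k - i) * gaussR q (n - k - i),
                    (q : ℝ) * gaussR q (i - 1) ^ 2;
                  0, 1, 0, (q : ℝ) ^ (i - 1);
                  0, 0, -((q : ℝ) ^ (2 * i) * gaussR q (n - k - i)),
                    (q : ℝ) ^ i * gaussR q (i - 1);
                  0, 0, -((q : ℝ) ^ i * gaussR q (k - i)), gaussR q (i - 1)]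
        = -((q : ℝ) ^ (k + i) * gaussR q (i - 1) * gaussR q (n - 2 * k)) ∧
      -((q : ℝ) ^ (k + i) * gaussR q (i - 1) * gaussR q (n - 2 * k)) ≠ 0 := by
  have hq1 : (1 : ℝ) < (q : ℝ) := by exact_mod_cast hq
  have hq0 : (q : ℝ) - 1 ≠ 0 := by linarith
  have hqpos : (0 : ℝ) < q := by linarith
  obtain ⟨j, hj⟩ : ∃ j, i = j + 1 + 1 := ⟨i - 2, by omega⟩
  obtain ⟨a, ha⟩ : ∃ a, k = i + a + 1 := ⟨k - i - 1, by omega⟩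
  obtain ⟨b, hb⟩ : ∃ b, n = 2 * k + b + 1 := ⟨n - 2 * k - 1, by omega⟩
  subst hj ha hb
  have e1 : j + 1 + 1 + a + 1 - (j + 1 + 1) = a + 1 := by omega
  have e2 : 2 * (j + 1 + 1 + a + 1) + b + 1 - (j + 1 + 1 + a + 1) - (j + 1 + 1) =
      a + b + 2 := by omega
  have e3 : j + 1 + 1 - 1 = j + 1 := by omega
  have e4 : j + 1 + 1 + a + 1 + (j + 1 + 1) = 2 * j + a + 5 := by omega
  have e5 : 2 * (j + 1 + 1 + a + 1) + b + 1 - 2 * (j + 1 + 1 + a + 1) = b + 1 := by omega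
  rw [e1, e2, e3, e4, e5]
  constructor
  · simp [Matrix.det_succ_row_zero, Fin.sum_univ_succ]
    unfold gaussR
    field_simp
    ring
  · unfold gaussR
    have h1 : (q : ℝ) ^ (j + 1) - 1 > 0 := by
      have := one_lt_pow₀ (n := j + 1) hq1 (by omega)
      linarith
    have h2 : (q : ℝ) ^ (b + 1) - 1 > 0 := by
      have := one_lt_pow₀ (n := b + 1) hq1 (by omega)
      linarith
    have h3 : (0:ℝ) < (q:ℝ) ^ (2 * j + a + 5) := by positivity
    intro h
    have hd : (0:ℝ) < (q:ℝ) - 1 := by linarith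
    have hpos : (0:ℝ) < ↑q ^ (2 * j + a + 5) * ((↑q ^ (j + 1) - 1) / (↑q - 1)) *
        ((↑q ^ (b + 1) - 1) / (↑q - 1)) := by positivity
    linarith
end

section
/- In the Grassmann graph J_q(n,k) with n > 2k, if x, y are vertices at distance i with 1 < i < k and z is a neighbor of x with ∂(z,y) = i + 1, then dim(z ∩ x ∩ y) = k - i - 1 and dim(z ∩ (x + y)) = k - 1. -/
/-- The Grassmann graph: vertices are the `k`-dimensional subspaces of `V`;
two vertices are adjacent when their intersection has dimension `k - 1`. -/
def grassmannGraph (F V : Type*) [Field F] [AddCommGroup V] [Module F V] (k : ℕ) :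
    SimpleGraph {W : Submodule F V // Module.finrank F W = k} where
  Adj x y := x ≠ y ∧ Module.finrank F (x.1 ⊓ y.1 : Submodule F V) = k - 1
  symm := by
    constructor
    intro x y h
    exact ⟨h.1.symm, by rw [inf_comm]; exact h.2⟩
  loopless := by
    constructor
    intro x h
    exact h.1 rfl

/-!
Along an edge `u ~ v` of `J_q(n,k)` the dimension of the intersection with a fixed subspace `y`
changes by at most one, and when `x ≠ y` one can always step from `x` to a neighbour meeting `y`
in one more dimension (a hyperplane of `x` through `x ∩ y`, plus a vector of `y \ x`).
Hence `∂(x,y) = k - dim(x ∩ y)`. The hypotheses then pin down `dim(x ∩ y) = k - i`,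
`dim(z ∩ y) = k - i - 1` and `dim(z ∩ x) = k - 1`, and both claims are dimension counts:
`z ∩ x` and `x ∩ y` meet inside `x` in at least `k - i - 1` dimensions, and `z ⊄ x + y`
because `dim(z + y) = k + i + 1 > dim(x + y)`.
-/

open Module Submodule

namespace Submodule

variable {K V : Type*} [Field K] [AddCommGroup V] [Module K V] [FiniteDimensional K V]

theorem exists_le_le_finrank_eq {N P : Submodule K V} (hNP : N ≤ P) {d : ℕ}
    (hNd : finrank K N ≤ d) (hdP : d ≤ finrank K P) :
    ∃ H : Submodule K V, N ≤ H ∧ H ≤ P ∧ finrank K H = d := by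
  obtain ⟨m, rfl⟩ := Nat.exists_eq_add_of_le hNd
  clear hNd
  induction m generalizing N with
  | zero => exact ⟨N, le_rfl, hNP, rfl⟩
  | succ m ih =>
    obtain ⟨v, hvP, hvN⟩ := SetLike.exists_of_lt (lt_of_le_of_ne hNP (by rintro rfl; omega))
    have hrank := finrank_sup_span_singleton hvN
    obtain ⟨H, hNH, hHP, hH⟩ :=
      ih (sup_le hNP ((span_singleton_le_iff_mem v P).mpr hvP)) (by omega)
    exact ⟨H, le_sup_left.trans hNH, hHP, by omega⟩

theorem finrank_inf_add_finrank_inf_le (a b c : Submodule K V) :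
    finrank K ↥(a ⊓ b) + finrank K ↥(b ⊓ c) ≤ finrank K ↥(a ⊓ b ⊓ c) + finrank K b := by
  have hinf : a ⊓ b ⊓ (b ⊓ c) = a ⊓ b ⊓ c := by
    rw [← inf_assoc, inf_assoc a, inf_idem]
  have hsum := finrank_sup_add_finrank_inf_eq (a ⊓ b) (b ⊓ c)
  have hsup := finrank_mono (sup_le inf_le_right inf_le_left : a ⊓ b ⊔ b ⊓ c ≤ b)
  rw [hinf] at hsum
  omega

theorem not_le_sup_of_finrank_inf_lt {x y z : Submodule K V}
    (hzx : finrank K z = finrank K x) (h : finrank K ↥(z ⊓ y) < finrank K ↥(x ⊓ y)) :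
    ¬z ≤ x ⊔ y := by
  intro hz
  have hsup := finrank_mono (sup_le hz le_sup_right : z ⊔ y ≤ x ⊔ y)
  have hx := finrank_sup_add_finrank_inf_eq x y
  have hz := finrank_sup_add_finrank_inf_eq z y
  omega

end Submodule

namespace grassmannGraph

variable {K V : Type*} [Field K] [AddCommGroup V] [Module K V] [FiniteDimensional K V] {k : ℕ}

theorem finrank_inf_le (x y : {W : Submodule K V // finrank K W = k}) :
    finrank K ↥(x.1 ⊓ y.1) ≤ k :=
  (finrank_mono inf_le_left).trans_eq x.2

theorem finrank_inf_eq_iff {x y : {W : Submodule K V // finrank K W = k}} :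
    finrank K ↥(x.1 ⊓ y.1) = k ↔ x = y := by
  refine ⟨fun h ↦ Subtype.ext ?_, by rintro rfl; rw [inf_idem, x.2]⟩
  have hx : x.1 ⊓ y.1 = x.1 := eq_of_le_of_finrank_le inf_le_left (by rw [x.2, h])
  exact eq_of_le_of_finrank_le (hx ▸ inf_le_right) (by rw [x.2, y.2])

theorem adj_iff {x y : {W : Submodule K V // finrank K W = k}} :
    (grassmannGraph K V k).Adj x y ↔ finrank K ↥(x.1 ⊓ y.1) + 1 = k := by
  have := finrank_inf_le x y
  refine ⟨fun ⟨hne, h⟩ ↦ ?_, fun h ↦ ⟨fun he ↦ ?_, by omega⟩⟩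
  · have := mt finrank_inf_eq_iff.mp hne
    omega
  · have := finrank_inf_eq_iff.mpr he
    omega

theorem finrank_inf_le_of_adj {u v : {W : Submodule K V // finrank K W = k}}
    (h : (grassmannGraph K V k).Adj u v) (y : Submodule K V) :
    finrank K ↥(v.1 ⊓ y) ≤ finrank K ↥(u.1 ⊓ y) + 1 := by
  have huv := adj_iff.mp h
  have hcount := finrank_inf_add_finrank_inf_le u.1 v.1 y
  have hmono := finrank_mono (inf_le_inf_right y inf_le_left : u.1 ⊓ v.1 ⊓ y ≤ u.1 ⊓ y)
  rw [v.2] at hcount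
  omega

theorem le_finrank_inf_add_length {x y : {W : Submodule K V // finrank K W = k}}
    (w : (grassmannGraph K V k).Walk x y) : k ≤ finrank K ↥(x.1 ⊓ y.1) + w.length := by
  induction w with
  | @nil u => rw [inf_idem, SimpleGraph.Walk.length_nil, u.2]; omega
  | @cons _ _ w h _ ih =>
    have := finrank_inf_le_of_adj h w.1
    rw [SimpleGraph.Walk.length_cons]
    omega

theorem exists_adj_finrank_inf_eq {x y : {W : Submodule K V // finrank K W = k}}
    (hxy : x ≠ y) : ∃ z, (grassmannGraph K V k).Adj x z ∧
      finrank K ↥(z.1 ⊓ y.1) = finrank K ↥(x.1 ⊓ y.1) + 1 := by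
  have hlt : finrank K ↥(x.1 ⊓ y.1) < k :=
    (finrank_inf_le x y).lt_of_ne (mt finrank_inf_eq_iff.mp hxy)
  have hyx : ¬y.1 ≤ x.1 := fun hle ↦ by rw [inf_eq_right.mpr hle, y.2] at hlt; omega
  obtain ⟨v, hvy, hvx⟩ := SetLike.not_le_iff_exists.mp hyx
  obtain ⟨H, hxyH, hHx, hH⟩ :=
    exists_le_le_finrank_eq (inf_le_left : x.1 ⊓ y.1 ≤ x.1) (d := k - 1) (by omega) (by omega)
  have hvH : v ∉ H := fun h ↦ hvx (hHx h)
  have hz : finrank K ↥(H ⊔ K ∙ v) = k := by rw [finrank_sup_span_singleton hvH]; omega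
  let z : {W : Submodule K V // finrank K W = k} := ⟨H ⊔ K ∙ v, hz⟩
  have hxz : x ≠ z := fun he ↦ hvx (he ▸ mem_sup_right (mem_span_singleton_self v))
  have hadj : (grassmannGraph K V k).Adj x z := by
    have := finrank_mono (le_inf hHx le_sup_left : H ≤ x.1 ⊓ z.1)
    have := finrank_inf_le x z
    have := mt finrank_inf_eq_iff.mp hxz
    exact adj_iff.mpr (by omega)
  refine ⟨z, hadj, le_antisymm (finrank_inf_le_of_adj hadj y.1) ?_⟩
  have hle : x.1 ⊓ y.1 ⊔ K ∙ v ≤ z.1 ⊓ y.1 :=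
    sup_le (le_inf (hxyH.trans le_sup_left) inf_le_right)
      (le_inf le_sup_right ((span_singleton_le_iff_mem v y.1).mpr hvy))
  exact finrank_sup_span_singleton (fun h ↦ hvx (mem_inf.mp h).1) ▸ finrank_mono hle

theorem exists_walk_length_add_finrank_inf (x y : {W : Submodule K V // finrank K W = k}) :
    ∃ w : (grassmannGraph K V k).Walk x y, w.length + finrank K ↥(x.1 ⊓ y.1) = k := by
  obtain ⟨m, hm⟩ := Nat.exists_eq_add_of_le (finrank_inf_le x y)
  induction m generalizing x with
  | zero =>
    obtain rfl := finrank_inf_eq_iff.mp hm.symm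
    exact ⟨.nil, by simpa using hm.symm⟩
  | succ m ih =>
    have hxy : x ≠ y := fun h ↦ by have := finrank_inf_eq_iff.mpr h; omega
    obtain ⟨z, hxz, hz⟩ := exists_adj_finrank_inf_eq hxy
    obtain ⟨w, hw⟩ := ih z (by omega)
    exact ⟨.cons hxz w, by rw [SimpleGraph.Walk.length_cons]; omega⟩

theorem dist_add_finrank_inf (x y : {W : Submodule K V // finrank K W = k}) :
    (grassmannGraph K V k).dist x y + finrank K ↥(x.1 ⊓ y.1) = k := by
  obtain ⟨w, hw⟩ := exists_walk_length_add_finrank_inf x y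
  obtain ⟨w', hw'⟩ := SimpleGraph.Reachable.exists_walk_length_eq_dist ⟨w⟩
  have hle := SimpleGraph.dist_le w
  have hge := le_finrank_inf_add_length w'
  omega

end grassmannGraph

theorem stmt16_general {F V : Type*} [Field F] [AddCommGroup V] [Module F V]
    [FiniteDimensional F V] {k : ℕ}
    (x y z : {W : Submodule F V // Module.finrank F W = k}) (i : ℕ)
    (hd : (grassmannGraph F V k).dist x y = i)
    (hadj : (grassmannGraph F V k).Adj x z)
    (hdz : (grassmannGraph F V k).dist z y = i + 1) :
    Module.finrank F (z.1 ⊓ x.1 ⊓ y.1 : Submodule F V) = k - i - 1 ∧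
    Module.finrank F (z.1 ⊓ (x.1 ⊔ y.1) : Submodule F V) = k - 1 := by
  have hxy := grassmannGraph.dist_add_finrank_inf x y
  have hzy := grassmannGraph.dist_add_finrank_inf z y
  have hzx := grassmannGraph.adj_iff.mp hadj.symm
  have hzxy := finrank_inf_add_finrank_inf_le z.1 x.1 y.1
  have hzxy_le := finrank_mono (inf_le_inf_right y.1 inf_le_left :
    z.1 ⊓ x.1 ⊓ y.1 ≤ z.1 ⊓ y.1)
  have hz_not_le := not_le_sup_of_finrank_inf_lt (y := y.1) (z.2.trans x.2.symm) (by omega)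
  have hlt := finrank_lt_finrank_of_lt (inf_lt_left.mpr hz_not_le)
  have hge := finrank_mono (inf_le_inf_left z.1 le_sup_left : z.1 ⊓ x.1 ≤ z.1 ⊓ (x.1 ⊔ y.1))
  rw [x.2] at hzxy
  rw [z.2] at hlt
  constructor <;> omega

theorem stmt16 {F V : Type*} [Field F] [Fintype F] [AddCommGroup V] [Module F V]
    [FiniteDimensional F V] {n k : ℕ} (hn : Module.finrank F V = n)
    (hnk : n > 2 * k) (hk : 2 * k ≥ 6)
    (x y z : {W : Submodule F V // Module.finrank F W = k}) (i : ℕ)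
    (hi1 : 1 < i) (hik : i < k) (hd : (grassmannGraph F V k).dist x y = i)
    (hadj : (grassmannGraph F V k).Adj x z)
    (hdz : (grassmannGraph F V k).dist z y = i + 1) :
    Module.finrank F (z.1 ⊓ x.1 ⊓ y.1 : Submodule F V) = k - i - 1 ∧
    Module.finrank F (z.1 ⊓ (x.1 ⊔ y.1) : Submodule F V) = k - 1 :=
  stmt16_general x y z i hd hadj hdz
end

section
/- In the Grassmann graph J_q(n,k) with n > 2k, if x, y are vertices at distance i with 1 < i < k and z is a neighbor of x with ∂(z,y) = i - 1, then x ∩ y ⊆ z ⊆ x + y; consequently dim(z ∩ x ∩ y) = k - i and dim(z ∩ (x + y)) = k. -/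
section

open Module Submodule SimpleGraph

variable {F V : Type*} [Field F] [AddCommGroup V] [Module F V] [FiniteDimensional F V]

namespace Submodule

theorem exists_le_le_finrank_eq_s17 {p q : Submodule F V} (hpq : p ≤ q) {m : ℕ}
    (hpm : finrank F p ≤ m) (hmq : m ≤ finrank F q) :
    ∃ r : Submodule F V, p ≤ r ∧ r ≤ q ∧ finrank F r = m := by
  induction m, hpm using Nat.le_induction with
  | base => exact ⟨p, le_rfl, hpq, rfl⟩
  | succ m _ ih =>
    obtain ⟨r, hpr, hrq, rfl⟩ := ih (by omega)
    obtain ⟨v, hvq, hvr⟩ := SetLike.exists_of_lt (lt_of_le_of_ne hrq (by rintro rfl; omega))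
    exact ⟨r ⊔ span F {v}, le_sup_of_le_left hpr,
      sup_le hrq ((span_singleton_le_iff_mem v q).mpr hvq), finrank_sup_span_singleton hvr⟩

theorem inf_le_and_le_sup_of_finrank_add_le {x y z : Submodule F V}
    (h : finrank F ↥(x ⊓ y) + finrank F z ≤ finrank F ↥(z ⊓ x) + finrank F ↥(z ⊓ y)) :
    x ⊓ y ≤ z ∧ z ≤ x ⊔ y := by
  have hgrassmann := finrank_sup_add_finrank_inf_eq (z ⊓ x) (z ⊓ y)
  have hinf : z ⊓ x ⊓ (z ⊓ y) ≤ x ⊓ y := inf_le_inf inf_le_right inf_le_right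
  have hsup : z ⊓ x ⊔ z ⊓ y ≤ z ⊓ (x ⊔ y) :=
    sup_le (inf_le_inf_left _ le_sup_left) (inf_le_inf_left _ le_sup_right)
  have h₁ := finrank_mono hinf
  have h₂ := finrank_mono hsup
  have h₃ : finrank F ↥(z ⊓ (x ⊔ y)) ≤ finrank F z := finrank_mono inf_le_left
  constructor
  · have hxy : z ⊓ x ⊓ (z ⊓ y) = x ⊓ y := eq_of_le_of_finrank_le hinf (by omega)
    exact hxy ▸ inf_le_left.trans inf_le_left
  · exact inf_eq_left.mp (eq_of_le_of_finrank_le inf_le_left (by omega))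

end Submodule

namespace grassmannGraph

variable {k : ℕ}

theorem finrank_inf_le_s17 (u : {W : Submodule F V // finrank F W = k}) (w : Submodule F V) :
    finrank F ↥(u.1 ⊓ w) ≤ k :=
  (finrank_mono inf_le_left).trans u.2.le

theorem eq_of_finrank_inf_eq {u v : {W : Submodule F V // finrank F W = k}}
    (h : finrank F ↥(u.1 ⊓ v.1) = k) : u = v := by
  have huv : u.1 ⊓ v.1 = u.1 := eq_of_le_of_finrank_le inf_le_left (by rw [h, u.2])
  exact Subtype.ext (eq_of_le_of_finrank_le (inf_eq_left.mp huv) (by rw [u.2, v.2]))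

theorem finrank_inf_le_succ_of_adj {u v : {W : Submodule F V // finrank F W = k}}
    (h : (grassmannGraph F V k).Adj u v) (w : Submodule F V) :
    finrank F ↥(v.1 ⊓ w) ≤ finrank F ↥(u.1 ⊓ w) + 1 := by
  have hgrassmann := finrank_sup_add_finrank_inf_eq (u.1 ⊓ v.1) (v.1 ⊓ w)
  have hsup := finrank_mono (sup_le (inf_le_right : u.1 ⊓ v.1 ≤ v.1) (inf_le_left : v.1 ⊓ w ≤ v.1))
  have hinf := finrank_mono (inf_le_inf (inf_le_left : u.1 ⊓ v.1 ≤ u.1) (inf_le_right : v.1 ⊓ w ≤ w))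
  have hadj := h.2
  rw [v.2] at hsup
  omega

theorem le_finrank_inf_add_length_s17 {u v : {W : Submodule F V // finrank F W = k}}
    (p : (grassmannGraph F V k).Walk u v) :
    k ≤ finrank F ↥(u.1 ⊓ v.1) + p.length := by
  induction p with
  | @nil w => rw [inf_idem, w.2, Walk.length_nil, add_zero]
  | @cons _ _ w hadj _ ih =>
    have := finrank_inf_le_succ_of_adj hadj w.1
    rw [Walk.length_cons]
    omega

theorem exists_adj_finrank_inf_lt {u v : {W : Submodule F V // finrank F W = k}} (huv : u ≠ v) :
    ∃ z, (grassmannGraph F V k).Adj u z ∧ finrank F ↥(u.1 ⊓ v.1) < finrank F ↥(z.1 ⊓ v.1) := by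
  have hlt : finrank F ↥(u.1 ⊓ v.1) < k :=
    lt_of_le_of_ne (finrank_inf_le_s17 u v.1) (mt eq_of_finrank_inf_eq huv)
  obtain ⟨w, hwv, hwu⟩ := SetLike.not_le_iff_exists.mp fun hvu : v.1 ≤ u.1 =>
    huv (Subtype.ext (eq_of_le_of_finrank_le hvu (by rw [u.2, v.2])).symm)
  obtain ⟨H, hH, hHu, hHk⟩ := exists_le_le_finrank_eq_s17 (inf_le_left : u.1 ⊓ v.1 ≤ u.1)
    (m := k - 1) (by omega) (by rw [u.2]; omega)
  have hzk : finrank F ↥(H ⊔ span F {w}) = k := by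
    rw [finrank_sup_span_singleton fun hwH => hwu (hHu hwH), hHk]
    omega
  have hwz : w ∈ H ⊔ span F {w} := mem_sup_right (mem_span_singleton_self w)
  refine ⟨⟨H ⊔ span F {w}, hzk⟩, ⟨fun h => hwu (h ▸ hwz), ?_⟩, ?_⟩
  · show finrank F ↥(u.1 ⊓ (H ⊔ span F {w})) = k - 1
    have hge : finrank F H ≤ finrank F ↥(u.1 ⊓ (H ⊔ span F {w})) :=
      finrank_mono (le_inf hHu le_sup_left)
    have hlt' : finrank F ↥(u.1 ⊓ (H ⊔ span F {w})) < k := hzk ▸ finrank_lt_finrank_of_lt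
      (SetLike.lt_iff_le_and_exists.mpr ⟨inf_le_right, w, hwz, fun h => hwu (mem_inf.mp h).1⟩)
    omega
  · calc finrank F ↥(u.1 ⊓ v.1)
        < finrank F ↥(u.1 ⊓ v.1 ⊔ span F {w}) := by
          rw [finrank_sup_span_singleton fun h => hwu (mem_inf.mp h).1]
          omega
      _ ≤ _ := finrank_mono (sup_le (le_inf (hH.trans le_sup_left) inf_le_right)
          (le_inf le_sup_right ((span_singleton_le_iff_mem w v.1).mpr hwv)))

theorem exists_walk_length_add_finrank_inf_le (u v : {W : Submodule F V // finrank F W = k}) :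
    ∃ p : (grassmannGraph F V k).Walk u v, p.length + finrank F ↥(u.1 ⊓ v.1) ≤ k := by
  by_cases huv : u = v
  · subst huv
    exact ⟨Walk.nil, by rw [inf_idem, u.2, Walk.length_nil, zero_add]⟩
  · obtain ⟨z, hadj, hlt⟩ := exists_adj_finrank_inf_lt huv
    obtain ⟨p, hp⟩ := exists_walk_length_add_finrank_inf_le z v
    exact ⟨Walk.cons hadj p, by rw [Walk.length_cons]; omega⟩
termination_by k - finrank F ↥(u.1 ⊓ v.1)
decreasing_by have := finrank_inf_le_s17 z v.1; omega

theorem dist_eq (u v : {W : Submodule F V // finrank F W = k}) :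
    (grassmannGraph F V k).dist u v = k - finrank F ↥(u.1 ⊓ v.1) := by
  obtain ⟨p, hp⟩ := exists_walk_length_add_finrank_inf_le u v
  obtain ⟨q, hq⟩ := Reachable.exists_walk_length_eq_dist ⟨p⟩
  have := le_finrank_inf_add_length_s17 q
  have := dist_le p
  omega

end grassmannGraph

end

theorem stmt17_general {F V : Type*} [Field F] [AddCommGroup V] [Module F V]
    [FiniteDimensional F V] {k : ℕ}
    (x y z : {W : Submodule F V // Module.finrank F W = k}) (i : ℕ)
    (hi1 : 1 < i) (hd : (grassmannGraph F V k).dist x y = i)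
    (hadj : (grassmannGraph F V k).Adj x z)
    (hdz : (grassmannGraph F V k).dist z y = i - 1) :
    (x.1 ⊓ y.1 ≤ z.1 ∧ z.1 ≤ x.1 ⊔ y.1) ∧
    Module.finrank F (z.1 ⊓ x.1 ⊓ y.1 : Submodule F V) = k - i ∧
    Module.finrank F (z.1 ⊓ (x.1 ⊔ y.1) : Submodule F V) = k := by
  rw [grassmannGraph.dist_eq] at hd hdz
  have hzx : Module.finrank F ↥(z.1 ⊓ x.1) = k - 1 := inf_comm x.1 z.1 ▸ hadj.2
  have hxy := grassmannGraph.finrank_inf_le_s17 x y.1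
  have hzy := grassmannGraph.finrank_inf_le_s17 z y.1
  obtain ⟨hxyz, hzxy⟩ :=
    Submodule.inf_le_and_le_sup_of_finrank_add_le (x := x.1) (y := y.1) (z := z.1)
      (by rw [z.2]; omega)
  refine ⟨⟨hxyz, hzxy⟩, ?_, ?_⟩
  · rw [inf_assoc, inf_eq_right.mpr hxyz]
    omega
  · rw [inf_eq_left.mpr hzxy, z.2]

theorem stmt17 {F V : Type*} [Field F] [Fintype F] [AddCommGroup V] [Module F V]
    [FiniteDimensional F V] {n k : ℕ} (hn : Module.finrank F V = n)
    (hnk : n > 2 * k) (hk : 2 * k ≥ 6)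
    (x y z : {W : Submodule F V // Module.finrank F W = k}) (i : ℕ)
    (hi1 : 1 < i) (hik : i < k) (hd : (grassmannGraph F V k).dist x y = i)
    (hadj : (grassmannGraph F V k).Adj x z)
    (hdz : (grassmannGraph F V k).dist z y = i - 1) :
    (x.1 ⊓ y.1 ≤ z.1 ∧ z.1 ≤ x.1 ⊔ y.1) ∧
    Module.finrank F (z.1 ⊓ x.1 ⊓ y.1 : Submodule F V) = k - i ∧
    Module.finrank F (z.1 ⊓ (x.1 ⊔ y.1) : Submodule F V) = k :=
  stmt17_general x y z i hi1 hd hadj hdz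
end

section
/- For subspaces u, v, v' of an n-dimensional F_q-vector space V, there exists an invertible linear map σ of V with σ(u) = u and σ(v) = v' if and only if dim v = dim v' and dim(u ∩ v) = dim(u ∩ v'). -/
/-!
Split `V = W ⊕ C ⊕ D ⊕ E` with `W = u ⊓ v`, `W ⊕ C = u`, `W ⊕ D = v` and `E` a complement of
`u ⊔ v`. The dimensions of the four pieces depend only on `dim u`, `dim v`, `dim (u ⊓ v)` and
`dim V`, so under the hypotheses the decompositions for `(u, v)` and `(u, v')` have pieces of
equal dimension, and matching them piece by piece gives `σ`.
-/

open Module Submodule DirectSum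

section

variable {K V : Type*} [DivisionRing K] [AddCommGroup V] [Module K V] [FiniteDimensional K V]

theorem DirectSum.isInternal_of_iSup_eq_top_of_sum_finrank_eq {ι : Type*} [DecidableEq ι]
    [Fintype ι] {A : ι → Submodule K V} (hsup : ⨆ i, A i = ⊤)
    (hrank : ∑ i, finrank K (A i) = finrank K V) : IsInternal A := by
  have hsurj : Function.Surjective (coeLinearMap A) := by
    rw [← LinearMap.range_eq_top, range_coeLinearMap, hsup]
  exact ⟨(LinearMap.injective_iff_surjective_of_finrank_eq_finrank
    (by rw [finrank_directSum, hrank])).2 hsurj, hsurj⟩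

theorem DirectSum.IsInternal.exists_linearEquiv_map_eq {ι : Type*} [DecidableEq ι]
    {A B : ι → Submodule K V} (hA : IsInternal A) (hB : IsInternal B)
    (hrank : ∀ i, finrank K (A i) = finrank K (B i)) :
    ∃ σ : V ≃ₗ[K] V, ∀ i, (A i).map (σ : V →ₗ[K] V) = B i := by
  let φ : (⨁ i, A i) ≃ₗ[K] ⨁ i, B i :=
    congrLinearEquiv fun i ↦ LinearEquiv.ofFinrankEq _ _ (hrank i)
  let σ := (LinearEquiv.ofBijective (coeLinearMap A) hA).symm.trans
    (φ.trans (LinearEquiv.ofBijective (coeLinearMap B) hB))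
  refine ⟨σ, fun i ↦ eq_of_le_of_finrank_eq ?_ (by rw [LinearEquiv.finrank_map_eq, hrank])⟩
  rintro _ ⟨x, hx, rfl⟩
  have hx' : (LinearEquiv.ofBijective (coeLinearMap A) hA).symm x = of _ i ⟨x, hx⟩ := by
    rw [LinearEquiv.symm_apply_eq]; exact (coeLinearMap_of A i ⟨x, hx⟩).symm
  have : σ x = LinearEquiv.ofFinrankEq _ _ (hrank i) ⟨x, hx⟩ := by
    simp only [σ, φ, LinearEquiv.trans_apply, hx', coe_congrLinearEquiv, lmap_of]
    exact coeLinearMap_of _ _ _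
  simp [this]

theorem Submodule.exists_sup_eq_and_finrank_add_eq_of_le {W U : Submodule K V} (h : W ≤ U) :
    ∃ C : Submodule K V, W ⊔ C = U ∧ finrank K W + finrank K C = finrank K U := by
  obtain ⟨q, hq⟩ := exists_isCompl W
  have hsup : W ⊔ q ⊓ U = U := by
    rw [← sup_inf_assoc_of_le q h, hq.sup_eq_top, top_inf_eq]
  have hdisj : W ⊓ (q ⊓ U) = ⊥ := (hq.disjoint.mono_right inf_le_left).eq_bot
  have hrank := finrank_sup_add_finrank_inf_eq W (q ⊓ U)
  rw [hsup, hdisj, finrank_bot] at hrank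
  exact ⟨q ⊓ U, hsup, by omega⟩

-- The pieces are `u ⊓ v`, its complements in `u` and in `v`, and a complement of `u ⊔ v`.
theorem Submodule.exists_isInternal_adapted (u v : Submodule K V) :
    ∃ A : Fin 4 → Submodule K V, IsInternal A ∧ A 0 ⊔ A 1 = u ∧ A 0 ⊔ A 2 = v ∧
      ∀ i, finrank K (A i) = ![finrank K ↥(u ⊓ v), finrank K u - finrank K ↥(u ⊓ v),
        finrank K v - finrank K ↥(u ⊓ v),
        finrank K V + finrank K ↥(u ⊓ v) - finrank K u - finrank K v] i := by
  obtain ⟨C, hCu, hC⟩ := exists_sup_eq_and_finrank_add_eq_of_le (inf_le_left : u ⊓ v ≤ u)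
  obtain ⟨D, hDv, hD⟩ := exists_sup_eq_and_finrank_add_eq_of_le (inf_le_right : u ⊓ v ≤ v)
  obtain ⟨E, hE, hEr⟩ := exists_sup_eq_and_finrank_add_eq_of_le (le_top : u ⊔ v ≤ ⊤)
  have huv := finrank_sup_add_finrank_inf_eq u v
  rw [finrank_top] at hEr
  refine ⟨![u ⊓ v, C, D, E], isInternal_of_iSup_eq_top_of_sum_finrank_eq ?_ ?_, hCu, hDv, ?_⟩
  · have hle := le_iSup ![u ⊓ v, C, D, E]
    refine eq_top_iff.2 (hE.ge.trans (sup_le (sup_le ?_ ?_) (hle 3)))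
    · exact hCu.ge.trans (sup_le (hle 0) (hle 1))
    · exact hDv.ge.trans (sup_le (hle 0) (hle 2))
  · simp only [Fin.sum_univ_four]
    show finrank K ↥(u ⊓ v) + finrank K C + finrank K D + finrank K E = _
    omega
  · intro i
    fin_cases i
    · rfl
    · show finrank K C = finrank K u - finrank K ↥(u ⊓ v); omega
    · show finrank K D = finrank K v - finrank K ↥(u ⊓ v); omega
    · show finrank K E = finrank K V + finrank K ↥(u ⊓ v) - finrank K u - finrank K v; omega

end

theorem stmt18_general {F V : Type*} [Field F] [AddCommGroup V] [Module F V]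
    [FiniteDimensional F V] (u v v' : Submodule F V) :
    (∃ σ : V ≃ₗ[F] V,
        Submodule.map (σ : V →ₗ[F] V) u = u ∧ Submodule.map (σ : V →ₗ[F] V) v = v') ↔
      (Module.finrank F v = Module.finrank F v' ∧
        Module.finrank F (u ⊓ v : Submodule F V)
          = Module.finrank F (u ⊓ v' : Submodule F V)) := by
  constructor
  · rintro ⟨σ, hu, hv⟩
    refine ⟨by rw [← hv, LinearEquiv.finrank_map_eq], ?_⟩
    rw [← LinearEquiv.finrank_map_eq σ, map_inf _ σ.injective, hu, hv]
  · rintro ⟨hv, hinf⟩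
    obtain ⟨A, hA, hAu, hAv, hArank⟩ := exists_isInternal_adapted u v
    obtain ⟨B, hB, hBu, hBv, hBrank⟩ := exists_isInternal_adapted u v'
    obtain ⟨σ, hσ⟩ := hA.exists_linearEquiv_map_eq hB fun i ↦ by rw [hArank, hBrank, hv, hinf]
    refine ⟨σ, ?_, ?_⟩
    · conv_lhs => rw [← hAu, Submodule.map_sup, hσ, hσ, hBu]
    · rw [← hAv, Submodule.map_sup, hσ, hσ, hBv]

theorem stmt18 {F V : Type*} [Field F] [Fintype F] [AddCommGroup V] [Module F V]
    [FiniteDimensional F V] (u v v' : Submodule F V) :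
    (∃ σ : V ≃ₗ[F] V,
        Submodule.map (σ : V →ₗ[F] V) u = u ∧ Submodule.map (σ : V →ₗ[F] V) v = v') ↔
      (Module.finrank F v = Module.finrank F v' ∧
        Module.finrank F (u ⊓ v : Submodule F V)
          = Module.finrank F (u ⊓ v' : Submodule F V)) :=
  stmt18_general u v v'
end
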